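/- Let X and Y be 2×2 real symmetric positive definite matrices. Then for every t ∈ [0,1], the affine-invariant Riemannian geodesic and the Thompson geodesic coincide: X #_t Y = X *_t Y. -/

import Mathlib

open Matrix Filter Topology
open scoped Classical

noncomputable section

/-- Square real matrices. -/
abbrev Mat (n : ℕ) := Matrix (Fin n) (Fin n) ℝ

/-- The largest element of the real spectrum of a matrix. -/
noncomputable def lamMax {n : ℕ} (A : Mat n) : ℝ := sSup (spectrum ℝ A)

/-- The smallest element of the real spectrum of a matrix. -/
noncomputable def lamMin {n : ℕ} (A : Mat n) : ℝ := sInf (spectrum ℝ A)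

/-- The positive semidefinite square root (junk value `0` if not PSD). -/
noncomputable def sqrtM {n : ℕ} (X : Mat n) : Mat n :=
  if h : X.PosSemidef then
    (h.1.eigenvectorUnitary : Mat n) * Matrix.diagonal (fun i => Real.sqrt (h.1.eigenvalues i)) *
      (star (h.1.eigenvectorUnitary : Mat n))
  else 0

/-- `X^{-1/2}` for a positive definite matrix. -/
noncomputable def invSqrt {n : ℕ} (X : Mat n) : Mat n := (sqrtM X)⁻¹

/-- `λ_max(X^{-1/2} Y X^{-1/2})`, the largest generalized eigenvalue of the pair `(Y, X)`. -/
noncomputable def gmax {n : ℕ} (X Y : Mat n) : ℝ := lamMax (invSqrt X * Y * invSqrt X)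

/-- `λ_min(X^{-1/2} Y X^{-1/2})`, the smallest generalized eigenvalue of the pair `(Y, X)`. -/
noncomputable def gmin {n : ℕ} (X Y : Mat n) : ℝ := lamMin (invSqrt X * Y * invSqrt X)

/-- The Thompson geodesic `X *_t Y`. -/
noncomputable def thompson {n : ℕ} (X Y : Mat n) (t : ℝ) : Mat n :=
  if gmin X Y = gmax X Y then (gmin X Y) ^ t • X
  else ((gmax X Y ^ t - gmin X Y ^ t) / (gmax X Y - gmin X Y)) • Y +
    ((gmax X Y * gmin X Y ^ t - gmin X Y * gmax X Y ^ t) / (gmax X Y - gmin X Y)) • X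

/-- The Thompson part metric on positive definite matrices. -/
noncomputable def dT {n : ℕ} (X Y : Mat n) : ℝ :=
  max (Real.log (gmax X Y)) (Real.log (gmax Y X))

/-- Hilbert's projective metric on positive definite matrices. -/
noncomputable def dH {n : ℕ} (X Y : Mat n) : ℝ :=
  Real.log (gmax X Y / gmin X Y)

/-- The coefficient `m(X,Y) = dφ/dt(0)` of the Thompson geodesic. -/
noncomputable def mCoef {n : ℕ} (X Y : Mat n) : ℝ :=
  if gmax X Y = gmin X Y then 1 / gmin X Y
  else (Real.log (gmax X Y) - Real.log (gmin X Y)) / (gmax X Y - gmin X Y)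

/-- The coefficient `o(X,Y) = dψ/dt(0)` of the Thompson geodesic. -/
noncomputable def oCoef {n : ℕ} (X Y : Mat n) : ℝ :=
  if gmax X Y = gmin X Y then Real.log (gmin X Y) - 1
  else (gmax X Y * Real.log (gmin X Y) - gmin X Y * Real.log (gmax X Y)) /
    (gmax X Y - gmin X Y)

/-- The mean equation `∑ⱼ m(X*,Yⱼ)·Yⱼ + (∑ⱼ o(X*,Yⱼ))·X* = 0`. -/
def MeanEq {n k : ℕ} (Y : Fin k → Mat n) (Xs : Mat n) : Prop :=
  ∑ j, mCoef Xs (Y j) • Y j + (∑ j, oCoef Xs (Y j)) • Xs = 0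

/-- The Frobenius norm of a matrix. -/
noncomputable def frob {n : ℕ} (A : Mat n) : ℝ :=
  Real.sqrt (∑ i, ∑ j, (A i j) ^ 2)

/-- The inductive sequence of Algorithm 4.1: `indSeq hk Y X₁ i = X_{i+1}`, so that
`indSeq hk Y X₁ 0 = X₁` and `X_{i+1} = X_i *_{1/(i+1)} Y_j` with `j ≡ i (mod k)`,
`1 ≤ j ≤ k`. -/
noncomputable def indSeq {n k : ℕ} (hk : 0 < k) (Y : Fin k → Mat n) (X₁ : Mat n) :
    ℕ → Mat n
  | 0 => X₁
  | (i + 1) => thompson (indSeq hk Y X₁ i) (Y ⟨i % k, Nat.mod_lt i hk⟩)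
      (1 / ((i : ℝ) + 2))

/-- The map `T_p(X) = (⋯((X *_{1/(pk+2)} Y₁) *_{1/(pk+3)} Y₂)⋯) *_{1/((p+1)k+1)} Y_k`. -/
noncomputable def Tmap {n k : ℕ} (Y : Fin k → Mat n) (p : ℕ) (X : Mat n) : Mat n :=
  (List.finRange k).foldl
    (fun Z j => thompson Z (Y j) (1 / ((p : ℝ) * (k : ℝ) + ((j : ℕ) : ℝ) + 2))) X

/-- The spectral `t`-th power of a symmetric matrix (junk value `0` otherwise). -/
noncomputable def spdPow {n : ℕ} (A : Mat n) (t : ℝ) : Mat n :=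
  if h : A.IsHermitian then
    (h.eigenvectorUnitary : Mat n) * Matrix.diagonal (fun i => h.eigenvalues i ^ t) *
      (star (h.eigenvectorUnitary : Mat n))
  else 0

/-- The affine-invariant Riemannian geodesic `X #_t Y = X^{1/2} (X^{-1/2} Y X^{-1/2})^t X^{1/2}`. -/
noncomputable def riemann {n : ℕ} (X Y : Mat n) (t : ℝ) : Mat n :=
  sqrtM X * spdPow (invSqrt X * Y * invSqrt X) t * sqrtM X

/-! For 2×2 matrices `A = X^{-1/2} Y X^{-1/2}` has spectrum exactly `{α, β}`. On a two-point set
`λ ↦ λ^t` agrees with its secant line `c₁ λ + c₂`, so the functional calculus gives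
`A^t = c₁ A + c₂ I`, and conjugating by `X^{1/2}` turns this into `c₁ Y + c₂ X`, which is the
Thompson geodesic. -/

section

variable {n : ℕ}

lemma sqrtM_eq_cfc {X : Mat n} (hX : X.PosSemidef) : sqrtM X = cfc Real.sqrt X := by
  rw [sqrtM, dif_pos hX, hX.isHermitian.cfc_eq, IsHermitian.cfc, Unitary.conjStarAlgAut_apply]
  rfl

lemma spdPow_eq_cfc {A : Mat n} (hA : A.IsHermitian) (t : ℝ) :
    spdPow A t = cfc (fun x : ℝ => x ^ t) A := by
  rw [spdPow, dif_pos hA, hA.cfc_eq, IsHermitian.cfc, Unitary.conjStarAlgAut_apply]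
  rfl

lemma isHermitian_sqrtM {X : Mat n} (hX : X.PosSemidef) : (sqrtM X).IsHermitian := by
  rw [sqrtM_eq_cfc hX]
  exact cfc_predicate _ _

lemma sqrtM_mul_self {X : Mat n} (hX : X.PosSemidef) : sqrtM X * sqrtM X = X := by
  have hspec := (posSemidef_iff_isHermitian_and_spectrum_nonneg.mp hX).2
  rw [sqrtM_eq_cfc hX, ← cfc_mul ..]
  conv_rhs => rw [← cfc_id' ℝ X hX.isHermitian]
  exact cfc_congr fun x hx => Real.mul_self_sqrt (hspec hx)

lemma isUnit_det_sqrtM {X : Mat n} (hX : X.PosDef) : IsUnit (sqrtM X).det := by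
  have h : (sqrtM X).det * (sqrtM X).det = X.det := by
    rw [← det_mul, sqrtM_mul_self hX.posSemidef]
  exact isUnit_of_mul_isUnit_left (h ▸ hX.det_pos.ne'.isUnit)

lemma sqrtM_mul_invSqrt_conj {X : Mat n} (hX : X.PosDef) (Y : Mat n) :
    sqrtM X * (invSqrt X * Y * invSqrt X) * sqrtM X = Y := by
  have hS := isUnit_det_sqrtM hX
  simp only [invSqrt, ← mul_assoc, mul_nonsing_inv _ hS, one_mul]
  rw [mul_assoc, nonsing_inv_mul _ hS, mul_one]

lemma isHermitian_invSqrt_conj {X Y : Mat n} (hX : X.PosDef) (hY : Y.IsHermitian) :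
    (invSqrt X * Y * invSqrt X).IsHermitian := by
  have hS : (invSqrt X)ᴴ = invSqrt X := (isHermitian_sqrtM hX.posSemidef).inv.eq
  simpa only [hS] using isHermitian_mul_mul_conjTranspose (invSqrt X) hY

lemma spdPow_eq_of_rpow_eq_affine {A : Mat n} (hA : A.IsHermitian) {t c₁ c₂ : ℝ}
    (h : ∀ x ∈ spectrum ℝ A, x ^ t = c₁ * x + c₂) :
    spdPow A t = c₁ • A + c₂ • (1 : Mat n) := by
  rw [spdPow_eq_cfc hA, cfc_congr h, cfc_add .., cfc_const_mul .., cfc_id' ℝ A, cfc_const c₂ A,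
    Algebra.algebraMap_eq_smul_one]

lemma riemann_eq_of_rpow_eq_affine {X Y : Mat n} (hX : X.PosDef) (hY : Y.IsHermitian)
    {t c₁ c₂ : ℝ} (h : ∀ x ∈ spectrum ℝ (invSqrt X * Y * invSqrt X), x ^ t = c₁ * x + c₂) :
    riemann X Y t = c₁ • Y + c₂ • X := by
  rw [riemann, spdPow_eq_of_rpow_eq_affine (isHermitian_invSqrt_conj hX hY) h]
  simp only [Matrix.mul_add, Matrix.add_mul, Matrix.mul_smul, Matrix.smul_mul, Matrix.mul_one,
    sqrtM_mul_invSqrt_conj hX, sqrtM_mul_self hX.posSemidef]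

end

lemma Matrix.IsHermitian.spectrum_eq_pair_lamMin_lamMax {A : Mat 2} (hA : A.IsHermitian) :
    spectrum ℝ A = {lamMin A, lamMax A} := by
  have hspec : spectrum ℝ A = {hA.eigenvalues 0, hA.eigenvalues 1} := by
    ext x
    simp [hA.spectrum_real_eq_range_eigenvalues, Fin.exists_fin_two, eq_comm]
  rw [lamMin, lamMax, hspec, csInf_pair, csSup_pair]
  rcases le_total (hA.eigenvalues 0) (hA.eigenvalues 1) with h | h
  · simp [h]
  · simp [h, Set.pair_comm]

lemma rpow_eq_secant_of_mem_pair {α β x : ℝ} (hαβ : α ≠ β) (hx : x ∈ ({α, β} : Set ℝ)) (t : ℝ) :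
    x ^ t = (β ^ t - α ^ t) / (β - α) * x + (β * α ^ t - α * β ^ t) / (β - α) := by
  have hβα : β - α ≠ 0 := sub_ne_zero.mpr hαβ.symm
  rcases hx with rfl | rfl <;> field_simp <;> ring

theorem riemann_eq_thompson_two_by_two_general (X Y : Mat 2) (hX : X.PosDef) (hY : Y.PosDef)
    (t : ℝ) :
    riemann X Y t = thompson X Y t := by
  have hspec : spectrum ℝ (invSqrt X * Y * invSqrt X) = {gmin X Y, gmax X Y} :=
    (isHermitian_invSqrt_conj hX hY.isHermitian).spectrum_eq_pair_lamMin_lamMax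
  rw [thompson]
  split_ifs with hαβ
  · rw [riemann_eq_of_rpow_eq_affine hX hY.isHermitian (c₁ := 0) (c₂ := gmin X Y ^ t),
      zero_smul, zero_add]
    intro x hx
    rw [hspec] at hx
    rcases hx with rfl | rfl
    · simp
    · simp [hαβ]
  · exact riemann_eq_of_rpow_eq_affine hX hY.isHermitian fun x hx =>
      rpow_eq_secant_of_mem_pair hαβ (hspec ▸ hx) t

/-- for 2×2 SPD matrices the Riemannian and Thompson geodesics coincide. -/
theorem riemann_eq_thompson_two_by_two (X Y : Mat 2) (hX : X.PosDef) (hY : Y.PosDef)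
    (t : ℝ) (ht : t ∈ Set.Icc (0 : ℝ) 1) :
    riemann X Y t = thompson X Y t :=
  riemann_eq_thompson_two_by_two_general X Y hX hY t
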